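/- For a parameter ν ≥ 0 define q_ν(x) = √((ν²/16)(x−1)² + x), φ_ν(x) = (ν²/8)(x−1) + (ν/2)·q_ν(x), and ψ_ν(x) = ν²/8 + (ν/4)·((ν²/8)(x−1) + 1)/q_ν(x). Then for every x > 0: (1 + x)·ψ_ν(x)/(1 + φ_ν(x)) = (1 + 1/x)·ψ_ν(1/x)/(1 + φ_ν(1/x)). -/

import Mathlib

noncomputable def q (ν x : ℝ) : ℝ := Real.sqrt ((ν ^ 2 / 16) * (x - 1) ^ 2 + x)

noncomputable def φ (ν x : ℝ) : ℝ := (ν ^ 2 / 8) * (x - 1) + (ν / 2) * q ν x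

noncomputable def ψ (ν x : ℝ) : ℝ :=
  ν ^ 2 / 8 + (ν / 4) * ((ν ^ 2 / 8) * (x - 1) + 1) / q ν x

/-! The logarithmic derivative of `1 + φ` is `ψ / (1 + φ) = ν / (4 q)`, so the left-hand side
equals `ν (1 + x) / (4 q(x))`. Since `q(1/x) = q(x) / x`, this expression is unchanged
under `x ↦ 1/x`. -/

lemma q_pos (ν : ℝ) {x : ℝ} (hx : 0 < x) : 0 < q ν x :=
  Real.sqrt_pos.2 (by positivity)

lemma q_sq (ν : ℝ) {x : ℝ} (hx : 0 ≤ x) : q ν x ^ 2 = (ν ^ 2 / 16) * (x - 1) ^ 2 + x :=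
  Real.sq_sqrt (by positivity)

lemma q_one_div (ν : ℝ) {x : ℝ} (hx : 0 < x) : q ν (1 / x) = q ν x / x := by
  have h : (ν ^ 2 / 16) * (1 / x - 1) ^ 2 + 1 / x = ((ν ^ 2 / 16) * (x - 1) ^ 2 + x) / x ^ 2 := by
    field_simp
    ring
  rw [q, h, Real.sqrt_div (by positivity), Real.sqrt_sq hx.le, q]

lemma one_add_φ_pos {ν : ℝ} (hν : 0 ≤ ν) {x : ℝ} (hx : 0 ≤ x) : 0 < 1 + φ ν x := by
  have hq : 0 ≤ q ν x := Real.sqrt_nonneg _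
  have hq_sq := q_sq ν hx
  unfold φ
  nlinarith [mul_nonneg hν hq, sq_nonneg (ν / 2 * q ν x - (1 + ν ^ 2 / 8 * (x - 1))),
    sq_nonneg (ν / 2 * q ν x + (1 + ν ^ 2 / 8 * (x - 1)))]

lemma ψ_eq_mul_one_add_φ (ν : ℝ) {x : ℝ} (hq : q ν x ≠ 0) :
    ψ ν x = ν / (4 * q ν x) * (1 + φ ν x) := by
  unfold ψ φ
  field_simp
  ring

lemma ψ_div_one_add_φ {ν : ℝ} (hν : 0 ≤ ν) {x : ℝ} (hx : 0 < x) :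
    ψ ν x / (1 + φ ν x) = ν / (4 * q ν x) := by
  rw [ψ_eq_mul_one_add_φ ν (q_pos ν hx).ne', mul_div_cancel_right₀ _ (one_add_φ_pos hν hx.le).ne']

/-- The key symmetry identity used in the proof of the two-player score-ratio
result for the Alternative model. -/
theorem alternative_symmetry_identity (ν : ℝ) (hν : 0 ≤ ν) (x : ℝ) (hx : 0 < x) :
    (1 + x) * ψ ν x / (1 + φ ν x)
      = (1 + 1 / x) * ψ ν (1 / x) / (1 + φ ν (1 / x)) := by
  have hx' : 0 < 1 / x := one_div_pos.2 hx
  rw [mul_div_assoc, mul_div_assoc, ψ_div_one_add_φ hν hx, ψ_div_one_add_φ hν hx',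
    q_one_div ν hx]
  have hq := (q_pos ν hx).ne'
  field_simp
  ring
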